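/- arXiv:2109.01883 — 2 statements merged into one kernel-verified Lean document; each statement's English description precedes it below -/
import Mathlib

section
/- (Propagation of violated conditions to the next fragile item.) Let 1 ≤ i ≤ s-1 with b_i and b_{i+1} both of type L. If a^H(i) + F(a^L(i)) < k and a^H(s) - a^H(i) > U(i), then also a^H(i+1) + F(a^L(i+1)) < k and a^H(s) - a^H(i+1) > U(i+1). Here the total number of items s is assumed to satisfy s ≤ mk. -/
/-- Item types: `L` = fragile (light), `H` = non-fragile (heavy). -/
inductive Item : Type
  | L : Item
  | H : Item
  deriving DecidableEq, BEq

/-- A sequence of items `b` admits a feasible loading into `m` identical stacks of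
height at most `k`: there is an assignment of each item to a stack such that each stack
receives at most `k` items and, since items are placed in sequence order (each new item
on top of its stack), within each stack no `H` item comes after an `L` item. -/
def FeasibleLoading (m k : ℕ) (b : List Item) : Prop :=
  ∃ f : Fin b.length → Fin m,
    (∀ s : Fin m, (Finset.univ.filter (fun i => f i = s)).card ≤ k) ∧
    (∀ i j : Fin b.length, i < j → f i = f j → b.get i = Item.L → b.get j = Item.L)

/-- Modified modulo: `Fmod k x = x % k` if `x % k ≠ 0`, else `k`. -/
def Fmod (k x : ℕ) : ℕ := if x % k ≠ 0 then x % k else k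


lemma count_HL (l : List Item) : l.count Item.H + l.count Item.L = l.length := by
  induction l with
  | nil => simp
  | cons a t ih =>
    cases a <;>
      simp [List.count_cons, show (Item.L == Item.H) = false from rfl,
        show (Item.H == Item.L) = false from rfl, show (Item.L == Item.L) = true from rfl,
        show (Item.H == Item.H) = true from rfl] <;> omega

theorem stmt9 (m k : ℕ) (hm : 0 < m) (hk : 0 < k) (b : List Item)
    (hs : b.length ≤ m * k)
    (i : ℕ) (hi : i + 1 < b.length)
    (hbi : b.get ⟨i, by omega⟩ = Item.L) (hbi1 : b.get ⟨i + 1, hi⟩ = Item.L)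
    (h1 : (b.take (i + 1)).count Item.H + Fmod k ((b.take (i + 1)).count Item.L) < k)
    (h2 : (m * k : ℤ) - (((i : ℤ) + 1) - (((i + 1) % k : ℕ) : ℤ) + (k : ℤ)) <
          (b.count Item.H : ℤ) - ((b.take (i + 1)).count Item.H : ℤ)) :
    ((b.take (i + 2)).count Item.H + Fmod k ((b.take (i + 2)).count Item.L) < k) ∧
    ((m * k : ℤ) - (((i : ℤ) + 2) - (((i + 2) % k : ℕ) : ℤ) + (k : ℤ)) <
      (b.count Item.H : ℤ) - ((b.take (i + 2)).count Item.H : ℤ)) := by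
  have htake : b.take (i+2) = b.take (i+1) ++ [Item.L] := by
    rw [List.take_succ]
    congr 1
    have : b[i+1]? = some Item.L := by
      rw [List.getElem?_eq_getElem hi]; simp [← hbi1]
    simp [this]
  set H := (b.take (i+1)).count Item.H with hH
  set L := (b.take (i+1)).count Item.L with hL
  have hcH2 : (b.take (i+2)).count Item.H = H := by
    rw [htake, List.count_append]; rfl
  have hcL2 : (b.take (i+2)).count Item.L = L + 1 := by
    rw [htake, List.count_append]; rfl
  have hlen : H + L = i + 1 := by
    rw [hH, hL, count_HL, List.length_take]; omega
  have hLtot : L + 1 ≤ b.count Item.L := by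
    calc L + 1 = (b.take (i+2)).count Item.L := hcL2.symm
    _ ≤ b.count Item.L := (List.take_sublist _ _).count_le _
  have hHtot := count_HL b
  -- basic facts about Fmod from h1
  have hLk : L % k ≠ 0 := by
    intro h; rw [Fmod, if_neg (by simpa using h)] at h1; omega
  have hFm : Fmod k L = L % k := by rw [Fmod, if_pos hLk]
  rw [hFm] at h1
  have hLkpos : 0 < L % k := Nat.pos_of_ne_zero hLk
  have hmod1 : (i + 1) % k = H + L % k := by
    rw [← hlen, ← Nat.add_mod_mod, Nat.mod_eq_of_lt h1]
  rw [hmod1] at h2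
  have hk2 : H + L % k + 2 ≤ k := by omega
  have h1k : 1 % k = 1 := Nat.mod_eq_of_lt (by omega)
  have hmod2 : (i + 2) % k = H + L % k + 1 := by
    rw [show i + 2 = (i + 1) + 1 from rfl, Nat.add_mod, hmod1, h1k,
      Nat.mod_eq_of_lt (show H + L % k + 1 < k by omega)]
  have hmod3 : (L + 1) % k = L % k + 1 := by
    rw [Nat.add_mod, h1k, Nat.mod_eq_of_lt (show L % k + 1 < k by omega)]
  have hFm2 : Fmod k (L + 1) = L % k + 1 := by
    rw [Fmod, hmod3, if_pos (by omega)]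
  rw [hcH2, hcL2, hFm2, hmod2]
  constructor
  · omega
  · omega
end

section
/- (Characterization for height-2 stacks.) Let k = 2 and let S = (b_1, …, b_s) with s ≤ 2m. Then S admits no feasible loading into m stacks of height 2 if and only if: s = 2m (the vehicle is full), there exists an index j* with 1 ≤ j* < s such that b_1, …, b_{j*} are all of type L, b_{j*+1}, …, b_s are all of type H, and j* is odd. -/
instance : LawfulBEq Item := by
  exact { eq_of_beq := by
            intro a b h
            cases a <;> cases b <;> first | rfl | exact absurd h (by decide)
          rfl := by intro a; cases a <;> rfl }


namespace S14

abbrev rk (b : List Item) (t : Item) (i : ℕ) : ℕ := (b.take i).count t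

example : (Item.L == Item.H) = false := by rfl

lemma rk_succ (b : List Item) (t : Item) {i : ℕ} (hi : i < b.length) (ht : b[i] = t) :
    rk b t (i+1) = rk b t i + 1 := by
  unfold rk
  rw [List.take_succ, List.count_append, List.getElem?_eq_getElem hi, ht]
  have : (t == t) = true := by cases t <;> rfl
  simp [List.count_cons, this]

lemma rk_mono (b : List Item) (t : Item) {i j : ℕ} (hij : i ≤ j) :
    rk b t i ≤ rk b t j := by
  have h : b.take i = (b.take j).take i := by
    rw [List.take_take, Nat.min_eq_left hij]
  rw [rk, h]
  exact (List.take_sublist _ _).count_le t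

lemma rk_lt_rk (b : List Item) (t : Item) {i j : ℕ} (hij : i < j) (hi : i < b.length)
    (ht : b[i] = t) : rk b t i < rk b t j := by
  have h1 := rk_succ b t hi ht
  have h2 : rk b t (i+1) ≤ rk b t j := rk_mono b t hij
  omega

lemma rk_lt_count (b : List Item) (t : Item) {i : ℕ} (hi : i < b.length)
    (ht : b[i] = t) : rk b t i < b.count t := by
  have h1 : rk b t (i+1) = rk b t i + 1 := rk_succ b t hi ht
  have h2 : rk b t (i+1) ≤ b.count t := (List.take_sublist _ _).count_le t
  omega

lemma rk_le (b : List Item) (t : Item) (i : ℕ) : rk b t i ≤ i :=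
  le_trans (List.count_le_length) (by rw [List.length_take]; omega)

lemma count_LH (b : List Item) : b.count Item.L + b.count Item.H = b.length := by
  induction b with
  | nil => simp
  | cons a l ih =>
    cases a <;> simp [List.count_cons, show (Item.L == Item.H) = false from rfl,
      show (Item.H == Item.L) = false from rfl, show (Item.L == Item.L) = true from rfl,
      show (Item.H == Item.H) = true from rfl] <;> omega

lemma item_cases (x : Item) : x = Item.L ∨ x = Item.H := by cases x <;> simp

lemma card_pair_le (a c : ℕ) : ({a, c} : Finset ℕ).card ≤ 2 :=
  le_trans (Finset.card_insert_le _ _) (by simp)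


lemma LneH : Item.L ≠ Item.H := by simp

/-- generic two-per-stack cardinality bound -/
lemma card_le_two_of (b : List Item) (m : ℕ) (f : Fin b.length → Fin m) (s : Fin m)
    (r : Fin b.length → ℕ) (a : ℕ)
    (hmem : ∀ i : Fin b.length, f i = s → r i = 2*a ∨ r i = 2*a + 1)
    (hinj : ∀ i j : Fin b.length, f i = s → f j = s → i < j → r i < r j) :
    (Finset.univ.filter (fun i => f i = s)).card ≤ 2 := by
  calc (Finset.univ.filter (fun i => f i = s)).card
      ≤ ({2*a, 2*a+1} : Finset ℕ).card := by
        apply Finset.card_le_card_of_injOn r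
        · intro i hi
          simp only [Finset.mem_coe, Finset.mem_filter, Finset.mem_univ, true_and] at hi
          simp only [Finset.mem_coe, Finset.mem_insert, Finset.mem_singleton]
          exact hmem i hi
        · intro i hi j hj hij
          simp only [Finset.coe_filter, Set.mem_setOf_eq, Finset.mem_univ, true_and] at hi hj
          by_contra hne
          rcases lt_trichotomy i j with hlt | heq | hgt
          · exact absurd hij (Nat.ne_of_lt (hinj i j hi hj hlt))
          · exact hne heq
          · exact absurd hij.symm (Nat.ne_of_lt (hinj j i hj hi hgt))
    _ ≤ 2 := card_pair_le _ _

lemma feasA (m : ℕ) (b : List Item)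
    (hC : (b.count Item.L + 1)/2 + (b.count Item.H + 1)/2 ≤ m) :
    FeasibleLoading m 2 b := by
  set ℓ := b.count Item.L with hℓ
  set h := b.count Item.H with hh
  have hget : ∀ i : Fin b.length, b.get i = b[i.val] := fun i => List.get_eq_getElem
  set g : Fin b.length → ℕ := fun i =>
    if b[i.val] = Item.L then rk b Item.L i / 2 else (ℓ+1)/2 + rk b Item.H i / 2 with hg
  have hgL : ∀ i : Fin b.length, b[i.val] = Item.L → g i = rk b Item.L i / 2 := by
    intro i hi; simp only [hg]; rw [if_pos hi]
  have hgH : ∀ i : Fin b.length, b[i.val] = Item.H → g i = (ℓ+1)/2 + rk b Item.H i / 2 := by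
    intro i hi; simp only [hg]; rw [if_neg (by rw [hi]; exact (LneH ∘ Eq.symm))]
  have hLlt : ∀ i : Fin b.length, b[i.val] = Item.L → g i < (ℓ+1)/2 := by
    intro i hi
    rw [hgL i hi]
    have := rk_lt_count b Item.L i.isLt hi
    rw [← hℓ] at this
    omega
  have hHge : ∀ i : Fin b.length, b[i.val] = Item.H → (ℓ+1)/2 ≤ g i ∧ g i < m := by
    intro i hi
    rw [hgH i hi]
    have := rk_lt_count b Item.H i.isLt hi
    rw [← hh] at this
    omega
  have hgm : ∀ i : Fin b.length, g i < m := by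
    intro i
    rcases item_cases b[i.val] with hL | hH
    · have := hLlt i hL; omega
    · exact (hHge i hH).2
  refine ⟨fun i => ⟨g i, hgm i⟩, ?_, ?_⟩
  · intro s
    have hmemval : ∀ i : Fin b.length, (⟨g i, hgm i⟩ : Fin m) = s → g i = s.val := by
      intro i hi; exact congrArg Fin.val hi
    by_cases hsv : s.val < (ℓ+1)/2
    · -- all members are L items
      have hmL : ∀ i : Fin b.length, (⟨g i, hgm i⟩ : Fin m) = s → b[i.val] = Item.L := by
        intro i hi
        rcases item_cases b[i.val] with hL | hH
        · exact hL
        · exfalso; have := (hHge i hH).1; have := hmemval i hi; omega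
      apply card_le_two_of b m _ s (fun i => rk b Item.L i.val) s.val
      · intro i hi
        have h1 := hmL i hi
        have h2 := hmemval i hi
        rw [hgL i h1] at h2
        omega
      · intro i j hi hj hij
        exact rk_lt_rk b Item.L hij i.isLt (hmL i hi)
    · -- all members are H items
      have hmH : ∀ i : Fin b.length, (⟨g i, hgm i⟩ : Fin m) = s → b[i.val] = Item.H := by
        intro i hi
        rcases item_cases b[i.val] with hL | hH
        · exfalso; have := hLlt i hL; have := hmemval i hi; omega
        · exact hH
      apply card_le_two_of b m _ s (fun i => rk b Item.H i.val) (s.val - (ℓ+1)/2)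
      · intro i hi
        have h1 := hmH i hi
        have h2 := hmemval i hi
        rw [hgH i h1] at h2
        omega
      · intro i j hi hj hij
        exact rk_lt_rk b Item.H hij i.isLt (hmH i hi)
  · intro i j hij hf hiL
    rw [hget] at hiL ⊢
    rcases item_cases b[j.val] with hL | hH
    · exact hL
    · exfalso
      have hfv : g i = g j := congrArg Fin.val hf
      have h1 := hLlt i hiL
      have h2 := (hHge j hH).1
      omega


lemma card_filter_lt (n j : ℕ) (hj : j ≤ n) : (Finset.univ.filter (fun i : Fin n => i.val < j)).card = j := by
  rw [show (Finset.univ.filter (fun i : Fin n => i.val < j)) =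
      Finset.map (Fin.castLEEmb hj) Finset.univ from ?_]
  · simp
  · ext i
    simp only [Finset.mem_filter, Finset.mem_univ, true_and, Finset.mem_map]
    constructor
    · intro hi
      exact ⟨⟨i.val, hi⟩, rfl⟩
    · rintro ⟨a, -, rfl⟩
      simp

/-- adjusted rank: rank among `t`-items skipping pivot `p` -/
def ark (b : List Item) (t : Item) (p : Fin b.length) (i : Fin b.length) : ℕ :=
  if p.val < i.val then rk b t i - 1 else rk b t i

lemma ark_add_two_le (b : List Item) (t : Item) (p i : Fin b.length)
    (hp : b[p.val] = t) (hi : b[i.val] = t) (hne : i ≠ p) :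
    ark b t p i + 2 ≤ b.count t := by
  have hvne : i.val ≠ p.val := fun hv => hne (Fin.val_injective hv)
  unfold ark
  rcases Nat.lt_or_ge p.val i.val with hlt | hge
  · rw [if_pos hlt]
    have h1 := rk_lt_rk b t hlt p.isLt hp
    have h2 := rk_lt_count b t i.isLt hi
    omega
  · have hlt : i.val < p.val := by omega
    rw [if_neg (by omega)]
    have h1 := rk_lt_rk b t hlt i.isLt hi
    have h2 := rk_lt_count b t p.isLt hp
    omega

lemma ark_mono (b : List Item) (t : Item) (p i j : Fin b.length)
    (hp : b[p.val] = t) (hi : b[i.val] = t) (hj : b[j.val] = t)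
    (hip : i ≠ p) (hjp : j ≠ p) (hij : i < j) :
    ark b t p i < ark b t p j := by
  have hijv : i.val < j.val := hij
  have hivp : i.val ≠ p.val := fun hv => hip (Fin.val_injective hv)
  have hjvp : j.val ≠ p.val := fun hv => hjp (Fin.val_injective hv)
  have hrij := rk_lt_rk b t hijv i.isLt hi
  unfold ark
  rcases Nat.lt_or_ge p.val i.val with h1 | h1
  · rw [if_pos h1, if_pos (by omega)]
    have := rk_lt_rk b t h1 p.isLt hp
    omega
  · have h1' : i.val < p.val := by omega
    rw [if_neg (by omega)]
    rcases Nat.lt_or_ge p.val j.val with h2 | h2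
    · rw [if_pos h2]
      have ha := rk_lt_rk b t h1' i.isLt hi
      have hb := rk_lt_rk b t h2 p.isLt hp
      omega
    · rw [if_neg (by omega)]
      exact hrij

lemma feasB (m : ℕ) (b : List Item) (i0 i1 : Fin b.length) (h01 : i0 < i1)
    (hH0 : b[i0.val] = Item.H) (hL1 : b[i1.val] = Item.L)
    (hlen : b.length = 2*m) (hodd : b.count Item.L % 2 = 1) :
    FeasibleLoading m 2 b := by
  set ℓ := b.count Item.L with hℓ
  set h := b.count Item.H with hh
  have hLH := count_LH b
  rw [← hℓ, ← hh] at hLH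
  have hℓ1 : 1 ≤ ℓ := by omega
  have hhodd : h % 2 = 1 := by
    have : 1 ≤ ℓ := hℓ1
    have hc := rk_lt_count b Item.H i0.isLt hH0
    rw [← hh] at hc
    omega
  have hh1 : 1 ≤ h := by omega
  have hm1 : 1 ≤ m := by omega
  set g : Fin b.length → ℕ := fun i =>
    if i = i0 ∨ i = i1 then 0
    else if b[i.val] = Item.L then 1 + ark b Item.L i1 i / 2
    else 1 + (ℓ-1)/2 + ark b Item.H i0 i / 2 with hg
  have hg0 : ∀ i : Fin b.length, i = i0 ∨ i = i1 → g i = 0 := by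
    intro i hi; simp only [hg]; rw [if_pos hi]
  have hgL : ∀ i : Fin b.length, ¬(i = i0 ∨ i = i1) → b[i.val] = Item.L →
      g i = 1 + ark b Item.L i1 i / 2 := by
    intro i hi hL; simp only [hg]; rw [if_neg hi, if_pos hL]
  have hgH : ∀ i : Fin b.length, ¬(i = i0 ∨ i = i1) → b[i.val] = Item.H →
      g i = 1 + (ℓ-1)/2 + ark b Item.H i0 i / 2 := by
    intro i hi hH; simp only [hg]; rw [if_neg hi, if_neg (by rw [hH]; exact (LneH ∘ Eq.symm))]
  have hLrange : ∀ i : Fin b.length, ¬(i = i0 ∨ i = i1) → b[i.val] = Item.L →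
      1 ≤ g i ∧ g i ≤ (ℓ-1)/2 := by
    intro i hi hL
    have ha := ark_add_two_le b Item.L i1 i hL1 hL (fun hx => hi (Or.inr hx))
    rw [← hℓ] at ha
    rw [hgL i hi hL]
    omega
  have hHrange : ∀ i : Fin b.length, ¬(i = i0 ∨ i = i1) → b[i.val] = Item.H →
      1 + (ℓ-1)/2 ≤ g i ∧ g i < m := by
    intro i hi hH
    have ha := ark_add_two_le b Item.H i0 i hH0 hH (fun hx => hi (Or.inl hx))
    rw [← hh] at ha
    rw [hgH i hi hH]
    omega
  have hgm : ∀ i : Fin b.length, g i < m := by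
    intro i
    by_cases hi : i = i0 ∨ i = i1
    · rw [hg0 i hi]; omega
    · rcases item_cases b[i.val] with hL | hH
      · have := (hLrange i hi hL).2; omega
      · exact (hHrange i hi hH).2
  refine ⟨fun i => ⟨g i, hgm i⟩, ?_, ?_⟩
  · intro s
    have hmemval : ∀ i : Fin b.length, (⟨g i, hgm i⟩ : Fin m) = s → g i = s.val := by
      intro i hi; exact congrArg Fin.val hi
    rcases Nat.eq_zero_or_pos s.val with hs0 | hs1
    · -- stack 0 : only i0, i1
      have hsub : (Finset.univ.filter (fun i => (⟨g i, hgm i⟩ : Fin m) = s))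
          ⊆ {i0, i1} := by
        intro i hi
        simp only [Finset.mem_filter, Finset.mem_univ, true_and] at hi
        have hgi := hmemval i hi
        rw [hs0] at hgi
        simp only [Finset.mem_insert, Finset.mem_singleton]
        by_contra hc
        push_neg at hc
        have hnotin : ¬(i = i0 ∨ i = i1) := by tauto
        rcases item_cases b[i.val] with hL | hH
        · have := (hLrange i hnotin hL).1; omega
        · have := (hHrange i hnotin hH).1; omega
      calc _ ≤ ({i0, i1} : Finset (Fin b.length)).card := Finset.card_le_card hsub
        _ ≤ 2 := le_trans (Finset.card_insert_le _ _) (by simp)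
    · by_cases hsv : s.val ≤ (ℓ-1)/2
      · -- L stacks
        have hmL : ∀ i : Fin b.length, (⟨g i, hgm i⟩ : Fin m) = s →
            ¬(i = i0 ∨ i = i1) ∧ b[i.val] = Item.L := by
          intro i hi
          have hgi := hmemval i hi
          have hnotin : ¬(i = i0 ∨ i = i1) := by
            intro hx; rw [hg0 i hx] at hgi; omega
          refine ⟨hnotin, ?_⟩
          rcases item_cases b[i.val] with hL | hH
          · exact hL
          · exfalso; have := (hHrange i hnotin hH).1; omega
        apply card_le_two_of b m _ s (fun i => ark b Item.L i1 i) (s.val - 1)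
        · intro i hi
          obtain ⟨hni, hiL⟩ := hmL i hi
          have hgi := hmemval i hi
          rw [hgL i hni hiL] at hgi
          omega
        · intro i j hi hj hij
          obtain ⟨hni, hiL⟩ := hmL i hi
          obtain ⟨hnj, hjL⟩ := hmL j hj
          exact ark_mono b Item.L i1 i j hL1 hiL hjL
            (fun hx => hni (Or.inr hx)) (fun hx => hnj (Or.inr hx)) hij
      · -- H stacks
        have hmH : ∀ i : Fin b.length, (⟨g i, hgm i⟩ : Fin m) = s →
            ¬(i = i0 ∨ i = i1) ∧ b[i.val] = Item.H := by
          intro i hi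
          have hgi := hmemval i hi
          have hnotin : ¬(i = i0 ∨ i = i1) := by
            intro hx; rw [hg0 i hx] at hgi; omega
          refine ⟨hnotin, ?_⟩
          rcases item_cases b[i.val] with hL | hH
          · exfalso; have := (hLrange i hnotin hL).2; omega
          · exact hH
        apply card_le_two_of b m _ s (fun i => ark b Item.H i0 i) (s.val - 1 - (ℓ-1)/2)
        · intro i hi
          obtain ⟨hni, hiH⟩ := hmH i hi
          have hgi := hmemval i hi
          rw [hgH i hni hiH] at hgi
          omega
        · intro i j hi hj hij
          obtain ⟨hni, hiH⟩ := hmH i hi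
          obtain ⟨hnj, hjH⟩ := hmH j hj
          exact ark_mono b Item.H i0 i j hH0 hiH hjH
            (fun hx => hni (Or.inl hx)) (fun hx => hnj (Or.inl hx)) hij
  · intro i j hij hf hiL
    rw [List.get_eq_getElem] at hiL ⊢
    rcases item_cases b[j.val] with hL | hH
    · exact hL
    · exfalso
      have hfv : g i = g j := congrArg Fin.val hf
      by_cases hi01 : i = i0 ∨ i = i1
      · have hi1 : i = i1 := by
          rcases hi01 with h | h
          · exfalso; rw [h, hH0] at hiL; exact LneH hiL.symm
          · exact h
        have hgj0 : g j = 0 := by rw [← hfv, hg0 i hi01]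
        by_cases hj01 : j = i0 ∨ j = i1
        · rcases hj01 with h | h
          · rw [hi1, h] at hij; exact absurd hij (not_lt.mpr (le_of_lt h01))
          · rw [h] at hH; exact LneH (hL1.symm.trans hH)
        · rcases item_cases b[j.val] with hLj | hHj
          · exact LneH (hLj.symm.trans hH)
          · have := (hHrange j hj01 hHj).1; omega
      · have h1 := (hLrange i hi01 hiL)
        by_cases hj01 : j = i0 ∨ j = i1
        · have : g j = 0 := hg0 j hj01
          omega
        · have h2 := (hHrange j hj01 hH).1
          omega


lemma pattern_of_no_cross (b : List Item)
    (hnx : ∀ i0 i1 : Fin b.length, i0 < i1 → b[i0.val] = Item.H → b[i1.val] ≠ Item.L) :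
    (∀ p : Fin b.length, p.val < b.count Item.L → b[p.val] = Item.L) ∧
    (∀ p : Fin b.length, b.count Item.L ≤ p.val → b[p.val] = Item.H) := by
  have claimL : ∀ p : Fin b.length, b[p.val] = Item.L → p.val < b.count Item.L := by
    intro p hp
    have hall : ∀ x ∈ b.take (p.val+1), Item.L = x := by
      intro x hx
      obtain ⟨q, hq, hqx⟩ := List.getElem_of_mem hx
      have hqlen : q < p.val + 1 := by
        rw [List.length_take] at hq; omega
      have hq' : q < b.length := lt_of_lt_of_le hqlen p.isLt
      have hbx : b[q]'hq' = x := by rw [← hqx]; exact (List.getElem_take ..).symm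
      rcases item_cases (b[q]'hq') with hL | hHq
      · rw [← hbx, hL]
      · exfalso
        have hlt : q < p.val := by
          rcases Nat.lt_or_ge q p.val with h | h
          · exact h
          · exfalso
            have hqe : q = p.val := by omega
            have hpe : p = ⟨q, hq'⟩ := Fin.ext (by simp [hqe])
            rw [hpe] at hp
            exact LneH (hp.symm.trans hHq)
        exact hnx ⟨q, hq'⟩ p hlt hHq hp
    have hcnt : (b.take (p.val+1)).count Item.L = (b.take (p.val+1)).length :=
      List.count_eq_length.mpr hall
    have hlen : (b.take (p.val+1)).length = p.val+1 := by
      rw [List.length_take]; omega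
    have hle : (b.take (p.val+1)).count Item.L ≤ b.count Item.L :=
      (List.take_sublist _ _).count_le _
    omega
  have claimH : ∀ p : Fin b.length, b[p.val] = Item.H → b.count Item.L ≤ p.val := by
    intro p hp
    have hdrop : Item.L ∉ b.drop p.val := by
      intro hmem
      obtain ⟨q, hq, hqx⟩ := List.getElem_of_mem hmem
      have hql : p.val + q < b.length := by
        rw [List.length_drop] at hq; omega
      have hpq : b[p.val + q]'hql = Item.L := by
        rw [← hqx]; exact (List.getElem_drop ..).symm
      rcases Nat.eq_zero_or_pos q with h0 | hq0
      · have hpL : b[p.val] = Item.L := by simpa [h0] using hpq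
        exact LneH (hpL.symm.trans hp)
      · exact hnx p ⟨p.val+q, hql⟩ (by rw [Fin.lt_def]; simp; omega) hp hpq
    have h0 : (b.drop p.val).count Item.L = 0 := List.count_eq_zero.mpr hdrop
    have hsplit : b.count Item.L
        = (b.take p.val).count Item.L + (b.drop p.val).count Item.L := by
      rw [← List.count_append, List.take_append_drop]
    have := rk_le b Item.L p.val
    unfold rk at this
    omega
  constructor
  · intro p hp
    rcases item_cases b[p.val] with hL | hH
    · exact hL
    · exact absurd (claimH p hH) (by omega)
  · intro p hp
    rcases item_cases b[p.val] with hL | hH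
    · exact absurd (claimL p hL) (by omega)
    · exact hH

lemma infeas (m : ℕ) (b : List Item) (hfull : b.length = 2*m)
    (j : ℕ) (hjodd : Odd j) (hjlt : j < b.length)
    (hL : ∀ p : Fin b.length, p.val < j → b.get p = Item.L)
    (hH : ∀ p : Fin b.length, j ≤ p.val → b.get p = Item.H) :
    ¬ FeasibleLoading m 2 b := by
  rintro ⟨f, hcard, hcomp⟩
  have hsum : (Finset.univ : Finset (Fin b.length)).card =
      ∑ s : Fin m, (Finset.univ.filter (fun i => f i = s)).card :=
    Finset.card_eq_sum_card_fiberwise (fun x _ => Finset.mem_univ (f x))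
  have hcards : ∀ s : Fin m, (Finset.univ.filter (fun i => f i = s)).card = 2 := by
    by_contra hc
    push_neg at hc
    obtain ⟨t, ht⟩ := hc
    have hlt : (Finset.univ.filter (fun i => f i = t)).card < 2 :=
      lt_of_le_of_ne (hcard t) ht
    have hslt : ∑ s : Fin m, (Finset.univ.filter (fun i => f i = s)).card
        < ∑ _s : Fin m, 2 :=
      Finset.sum_lt_sum (fun s _ => hcard s) ⟨t, Finset.mem_univ t, hlt⟩
    rw [← hsum] at hslt
    simp only [Finset.sum_const, Finset.card_univ, Fintype.card_fin, smul_eq_mul] at hslt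
    omega
  set T := Finset.univ.filter (fun i : Fin b.length => i.val < j) with hT
  have hTcard : T.card = j := card_filter_lt b.length j (le_of_lt hjlt)
  have hTeven : Even T.card := by
    rw [Finset.card_eq_sum_card_fiberwise (f := f) (t := Finset.univ)
      (fun x _ => Finset.mem_univ (f x))]
    apply Finset.even_sum
    intro s _
    set A := T.filter (fun i => f i = s) with hA
    have hsub : A ⊆ Finset.univ.filter (fun i => f i = s) := by
      intro x hx
      simp only [hA, hT, Finset.mem_filter, Finset.mem_univ, true_and] at hx ⊢
      exact hx.2
    have hA2 : A.card ≤ 2 := le_trans (Finset.card_le_card hsub) (hcard s)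
    have hne1 : A.card ≠ 1 := by
      intro h1
      obtain ⟨i, hi⟩ := Finset.card_eq_one.mp h1
      have hiA : i ∈ A := by rw [hi]; exact Finset.mem_singleton_self i
      have hiT : i.val < j ∧ f i = s := by
        have := hiA
        simp only [hA, hT, Finset.mem_filter, Finset.mem_univ, true_and] at this
        exact this
      obtain ⟨a, c, hac, hFac⟩ := Finset.card_eq_two.mp (hcards s)
      have hiF : i ∈ Finset.univ.filter (fun x => f x = s) := hsub hiA
      rw [hFac] at hiF
      simp only [Finset.mem_insert, Finset.mem_singleton] at hiF
      -- the other element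
      have key : ∀ i' : Fin b.length, i' ≠ i → f i' = s → False := by
        intro i' hne hfi'
        have hi'A : i' ∉ A := by
          rw [hi]; simp [hne]
        have hi'ge : j ≤ i'.val := by
          by_contra hcon
          push_neg at hcon
          apply hi'A
          simp only [hA, hT, Finset.mem_filter, Finset.mem_univ, true_and]
          exact ⟨hcon, hfi'⟩
        have hi'H : b.get i' = Item.H := hH i' hi'ge
        have hiL : b.get i = Item.L := hL i hiT.1
        rcases lt_trichotomy i i' with hlt | heq | hgt
        · have := hcomp i i' hlt (hiT.2.trans hfi'.symm) hiL
          exact LneH (this.symm.trans hi'H)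
        · exact hne heq.symm
        · have : i'.val < i.val := hgt
          omega
      rcases hiF with he | he
      · apply key c (by rw [he]; exact fun hx => hac hx.symm)
        have : c ∈ Finset.univ.filter (fun x => f x = s) := by
          rw [hFac]; simp
        simp only [Finset.mem_filter, Finset.mem_univ, true_and] at this
        exact this
      · apply key a (by rw [he]; exact fun hx => hac hx)
        have : a ∈ Finset.univ.filter (fun x => f x = s) := by
          rw [hFac]; simp
        simp only [Finset.mem_filter, Finset.mem_univ, true_and] at this
        exact this
    rw [Nat.even_iff]
    omega
  rw [hTcard] at hTeven
  rw [Nat.even_iff] at hTeven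
  rw [Nat.odd_iff] at hjodd
  omega


end S14

theorem stmt14 (m : ℕ) (hm : 0 < m) (b : List Item) (hs : b.length ≤ 2 * m) :
    ¬ FeasibleLoading m 2 b ↔
      (b.length = 2 * m ∧
        ∃ j : ℕ, 1 ≤ j ∧ j < b.length ∧ Odd j ∧
          (∀ p : Fin b.length, (p : ℕ) < j → b.get p = Item.L) ∧
          (∀ p : Fin b.length, j ≤ (p : ℕ) → b.get p = Item.H)) := by
  constructor
  · intro hnf
    by_contra hnot
    push_neg at hnot
    apply hnf
    by_cases hC : (b.count Item.L + 1)/2 + (b.count Item.H + 1)/2 ≤ m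
    · exact S14.feasA m b hC
    · have hLH := S14.count_LH b
      push_neg at hC
      have hfull : b.length = 2*m := by omega
      have hodds : b.count Item.L % 2 = 1 ∧ b.count Item.H % 2 = 1 := by omega
      by_cases hex : ∃ i0 i1 : Fin b.length,
          i0 < i1 ∧ b[i0.val] = Item.H ∧ b[i1.val] = Item.L
      · obtain ⟨i0, i1, h01, h0, h1⟩ := hex
        exact S14.feasB m b i0 i1 h01 h0 h1 hfull hodds.1
      · exfalso
        push_neg at hex
        have hpat := S14.pattern_of_no_cross b hex
        obtain ⟨p, hp1, hp2⟩ := hnot hfull (b.count Item.L) (by omega) (by omega)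
          (Nat.odd_iff.mpr hodds.1)
          (fun p hp => by rw [List.get_eq_getElem]; exact hpat.1 p hp)
        exact hp2 (by rw [List.get_eq_getElem]; exact hpat.2 p hp1)
  · rintro ⟨hfull, j, hj1, hjlt, hjodd, hL, hH⟩
    exact S14.infeas m b hfull j hjodd hjlt hL hH
end
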